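/- arXiv:2507.23517 — 2 statements merged into one kernel-verified Lean document; each statement's English description precedes it below -/
import Mathlib

section
/- Let G be a bridgeless graph with d(G)=4 and let uv be an edge with l_G(uv) = g*(G) ≥ 6. Then: (i) for every w ∈ M', the set N(w) ∩ (S_{3,3} ∪ K ∪ L) is contained in S_{3,3} (so w has a neighbor in S_{3,3} and no neighbor in K ∪ L); and (ii) for every w ∈ M with no edge joining w to S_{3,3}, one has N(w) ∩ K ≠ ∅ and N(w) ∩ L ≠ ∅. -/
/-!
Every vertex `w` of `S₄₄` has a neighbour at distance `3` from `u`; since `d(G) = 4`, that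
neighbour lies in `S₃₃` or in `S₃₄`, and in the latter case `w` itself witnesses that it is not
in `K'`. Symmetrically `w` has a neighbour in `S₃₃ ∪ L`. If only one edge leaves `w` towards
`S₃₃ ∪ K ∪ L`, both neighbours are its other end, which can then lie neither in `K` nor in `L`.
-/

/-- A multigraph: vertices `V`, edges `E`, each edge has two distinct endpoints. -/
structure Multigraph (V : Type*) (E : Type*) where
  ends : E → Sym2 V
  loopless : ∀ e, ¬ (ends e).IsDiag

namespace Multigraph

variable {V E : Type*}

/-- Adjacency in a multigraph: some edge joins `x` and `y`. -/
def Adjm (G : Multigraph V E) (x y : V) : Prop := ∃ e, G.ends e = s(x, y)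

/-- The underlying simple graph of a multigraph. -/
def toSimple (G : Multigraph V E) : SimpleGraph V where
  Adj x y := x ≠ y ∧ G.Adjm x y
  symm := by
    constructor
    rintro x y ⟨hne, e, he⟩
    exact ⟨hne.symm, e, he.trans (Sym2.eq_swap)⟩
  loopless := by constructor; rintro x ⟨hne, -⟩; exact hne rfl

/-- Distance between two vertices (length of a shortest path). -/
noncomputable def dist (G : Multigraph V E) (x y : V) : ℕ := G.toSimple.dist x y

/-- The diameter of a multigraph. -/
noncomputable def diam (G : Multigraph V E) : ℕ := sSup {n | ∃ x y, G.dist x y = n}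

/-- The multigraph obtained by deleting the edge `e₀`. -/
def deleteEdge (G : Multigraph V E) (e₀ : E) : Multigraph V {e : E // e ≠ e₀} where
  ends e := G.ends e.1
  loopless e := G.loopless e.1

/-- A (connected) multigraph is bridgeless if deleting any single edge leaves it connected. -/
def Bridgeless (G : Multigraph V E) : Prop :=
  ∀ e : E, ((G.deleteEdge e).toSimple).Connected

/-- Walks in a multigraph, recording the edges used. -/
inductive Walk (G : Multigraph V E) : V → V → Type _
  | nil {v : V} : Walk G v v
  | cons {x y z : V} (e : E) (he : G.ends e = s(x, y)) (p : Walk G y z) : Walk G x z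

namespace Walk

variable {G : Multigraph V E}

/-- The length (number of edges) of a walk. -/
def length : ∀ {x y : V}, G.Walk x y → ℕ
  | _, _, .nil => 0
  | _, _, .cons _ _ p => p.length + 1

/-- The list of edges of a walk. -/
def edges : ∀ {x y : V}, G.Walk x y → List E
  | _, _, .nil => []
  | _, _, .cons e _ p => e :: p.edges

/-- The list of vertices of a walk. -/
def support : ∀ {x y : V}, G.Walk x y → List V
  | x, _, .nil => [x]
  | x, _, .cons _ _ p => x :: p.support

/-- A closed walk is a cycle if its edges are distinct and its vertices
(other than the repeated base point) are distinct. -/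
def IsCycle {v : V} (p : G.Walk v v) : Prop :=
  p.edges.Nodup ∧ p.support.tail.Nodup ∧ 0 < p.length

end Walk

/-- The edge girth of `e`: the length of a shortest cycle containing `e`. -/
noncomputable def edgeGirth (G : Multigraph V E) (e : E) : ℕ :=
  sInf {n | ∃ (v : V) (p : G.Walk v v), p.IsCycle ∧ e ∈ p.edges ∧ p.length = n}

/-- The maximum edge girth `g*(G)`. -/
noncomputable def maxEdgeGirth (G : Multigraph V E) : ℕ :=
  sSup (Set.range fun e => G.edgeGirth e)

/-- An orientation of a multigraph: each edge is assigned a direction. -/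
structure Orientation (G : Multigraph V E) where
  dir : E → V × V
  compat : ∀ e, s((dir e).1, (dir e).2) = G.ends e

/-- Arcs of an orientation. -/
def Orientation.DAdj {G : Multigraph V E} (o : G.Orientation) (x y : V) : Prop :=
  ∃ e, o.dir e = (x, y)

/-- Directed distance in an orientation (`⊤` if unreachable). -/
noncomputable def Orientation.ddist {G : Multigraph V E} (o : G.Orientation) (x y : V) : ℕ∞ :=
  sInf {n : ℕ∞ | ∃ l : List V, List.Chain o.DAdj x l ∧
    (x :: l).getLast (List.cons_ne_nil x l) = y ∧ (l.length : ℕ∞) = n}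

/-- An orientation is strong if every vertex is reachable from every vertex by a directed path. -/
def Orientation.IsStrong {G : Multigraph V E} (o : G.Orientation) : Prop :=
  ∀ x y : V, o.ddist x y ≠ ⊤

/-- The diameter of an orientation. -/
noncomputable def Orientation.odiam {G : Multigraph V E} (o : G.Orientation) : ℕ∞ :=
  ⨆ (x : V) (y : V), o.ddist x y

end Multigraph

namespace Multigraph

variable {V E : Type*}

/-- `S G u v i j` is the set of vertices at distance `i` from `u` and `j` from `v`. -/
noncomputable def S (G : Multigraph V E) (u v : V) (i j : ℕ) : Set V :=
  {w | G.dist w u = i ∧ G.dist w v = j}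

/-- The neighbourhood of a vertex. -/
def nbhd (G : Multigraph V E) (w : V) : Set V := {x | G.Adjm w x}

end Multigraph

namespace Multigraph

variable {V E : Type*} (G : Multigraph V E) (u v : V)

/-- `A' = {w ∈ S₁₂ : N(w) ⊆ S₁₂ ∪ {u}}`. -/
noncomputable def setA' : Set V := {w ∈ G.S u v 1 2 | G.nbhd w ⊆ G.S u v 1 2 ∪ {u}}
/-- `A = S₁₂ − A'`. -/
noncomputable def setA : Set V := G.S u v 1 2 \ G.setA' u v
/-- `B' = {w ∈ S₂₁ : N(w) ⊆ S₂₁ ∪ {v}}`. -/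
noncomputable def setB' : Set V := {w ∈ G.S u v 2 1 | G.nbhd w ⊆ G.S u v 2 1 ∪ {v}}
/-- `B = S₂₁ − B'`. -/
noncomputable def setB : Set V := G.S u v 2 1 \ G.setB' u v
/-- `I' = {w ∈ S₂₃ : N(w) ⊆ S₂₃ ∪ A}`. -/
noncomputable def setI' : Set V := {w ∈ G.S u v 2 3 | G.nbhd w ⊆ G.S u v 2 3 ∪ G.setA u v}
/-- `I = S₂₃ − I'`. -/
noncomputable def setI : Set V := G.S u v 2 3 \ G.setI' u v
/-- `J' = {w ∈ S₃₂ : N(w) ⊆ S₃₂ ∪ B}`. -/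
noncomputable def setJ' : Set V := {w ∈ G.S u v 3 2 | G.nbhd w ⊆ G.S u v 3 2 ∪ G.setB u v}
/-- `J = S₃₂ − J'`. -/
noncomputable def setJ : Set V := G.S u v 3 2 \ G.setJ' u v
/-- `K' = {w ∈ S₃₄ : N(w) ⊆ S₃₄ ∪ I}`. -/
noncomputable def setK' : Set V := {w ∈ G.S u v 3 4 | G.nbhd w ⊆ G.S u v 3 4 ∪ G.setI u v}
/-- `K = S₃₄ − K'`. -/
noncomputable def setK : Set V := G.S u v 3 4 \ G.setK' u v
/-- `L' = {w ∈ S₄₃ : N(w) ⊆ S₄₃ ∪ J}`. -/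
noncomputable def setL' : Set V := {w ∈ G.S u v 4 3 | G.nbhd w ⊆ G.S u v 4 3 ∪ G.setJ u v}
/-- `L = S₄₃ − L'`. -/
noncomputable def setL : Set V := G.S u v 4 3 \ G.setL' u v
/-- `M' = {w ∈ S₄₄ : exactly one edge of G joins w to S₃₃ ∪ K ∪ L}`. -/
noncomputable def setM' : Set V :=
  {w ∈ G.S u v 4 4 |
    ∃! e : E, ∃ x ∈ G.S u v 3 3 ∪ G.setK u v ∪ G.setL u v, G.ends e = s(w, x)}
/-- `M = S₄₄ − M'`. -/
noncomputable def setM : Set V := G.S u v 4 4 \ G.setM' u v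

end Multigraph

namespace Multigraph

variable {V E : Type*} {G : Multigraph V E} {u v w p q t : V}

theorem Adjm.ne (h : G.Adjm w p) : w ≠ p := by
  rintro rfl
  obtain ⟨e, he⟩ := h
  exact G.loopless e (he ▸ Sym2.mk_isDiag_iff.mpr rfl)

theorem toSimple_adj : G.toSimple.Adj w p ↔ G.Adjm w p :=
  ⟨And.right, fun h => ⟨h.ne, h⟩⟩

theorem Adjm.symm (h : G.Adjm w p) : G.Adjm p w :=
  toSimple_adj.mp (toSimple_adj.mpr h).symm

-- `sSup` of an unbounded subset of `ℕ` is `0`, so a nonzero diameter bounds every distance.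
theorem dist_le_diam (h : G.diam ≠ 0) (x y : V) : G.dist x y ≤ G.diam :=
  le_csSup (by_contra fun hb => h (Nat.sSup_of_not_bddAbove hb)) ⟨x, y, rfl⟩

theorem exists_adjm_dist_eq_of_dist_eq_succ {n : ℕ} (h : G.dist w t = n + 1) :
    ∃ p, G.Adjm w p ∧ G.dist p t = n := by
  have hne : G.toSimple.dist w t ≠ 0 := by simp only [dist] at h; omega
  obtain ⟨walk, hlen⟩ := SimpleGraph.exists_walk_of_dist_ne_zero hne
  cases walk with
  | nil => simp at hne
  | @cons _ p _ hwp tail =>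
    refine ⟨p, toSimple_adj.mp hwp, ?_⟩
    have hle : G.toSimple.dist p t ≤ tail.length := SimpleGraph.dist_le tail
    have htri := hwp.reachable.dist_triangle_left t
    rw [SimpleGraph.dist_eq_one_iff_adj.mpr hwp] at htri
    simp only [SimpleGraph.Walk.length_cons] at hlen
    simp only [dist] at h ⊢
    omega

theorem exists_adjm_dist_three (hdiam : G.diam = 4) (hu : G.dist w u = 4)
    (hv : G.dist w v = 4) :
    ∃ p, G.Adjm w p ∧ G.dist p u = 3 ∧ (G.dist p v = 3 ∨ G.dist p v = 4) := by
  obtain ⟨p, hwp, hpu⟩ := exists_adjm_dist_eq_of_dist_eq_succ (n := 3) hu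
  refine ⟨p, hwp, hpu, ?_⟩
  have hstep := (toSimple_adj.mpr hwp).diff_dist_adj (u := v)
  rw [SimpleGraph.dist_comm, SimpleGraph.dist_comm (u := v)] at hstep
  have hbound := dist_le_diam (hdiam ▸ four_ne_zero) p v
  simp only [dist] at hv hbound ⊢
  omega

theorem mem_setK_of_adjm (hp : p ∈ G.S u v 3 4) (hpw : G.Adjm p w) (hw : G.dist w u = 4) :
    p ∈ G.setK u v := by
  refine ⟨hp, fun hK => ?_⟩
  rcases hK.2 hpw with ⟨hwu, -⟩ | ⟨⟨hwu, -⟩, -⟩ <;> omega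

theorem mem_setL_of_adjm (hp : p ∈ G.S u v 4 3) (hpw : G.Adjm p w) (hw : G.dist w v = 4) :
    p ∈ G.setL u v := by
  refine ⟨hp, fun hL => ?_⟩
  rcases hL.2 hpw with ⟨-, hwv⟩ | ⟨⟨-, hwv⟩, -⟩ <;> omega

theorem exists_adjm_mem_S_union_setK (hdiam : G.diam = 4) (hw : w ∈ G.S u v 4 4) :
    ∃ p, G.Adjm w p ∧ p ∈ G.S u v 3 3 ∪ G.setK u v := by
  obtain ⟨p, hwp, hpu, hpv | hpv⟩ := exists_adjm_dist_three hdiam hw.1 hw.2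
  · exact ⟨p, hwp, Or.inl ⟨hpu, hpv⟩⟩
  · exact ⟨p, hwp, Or.inr (mem_setK_of_adjm ⟨hpu, hpv⟩ hwp.symm hw.1)⟩

theorem exists_adjm_mem_S_union_setL (hdiam : G.diam = 4) (hw : w ∈ G.S u v 4 4) :
    ∃ p, G.Adjm w p ∧ p ∈ G.S u v 3 3 ∪ G.setL u v := by
  obtain ⟨p, hwp, hpv, hpu | hpu⟩ := exists_adjm_dist_three hdiam hw.2 hw.1
  · exact ⟨p, hwp, Or.inl ⟨hpu, hpv⟩⟩
  · exact ⟨p, hwp, Or.inr (mem_setL_of_adjm ⟨hpu, hpv⟩ hwp.symm hw.2)⟩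

theorem mem_S_of_mem_union_setK_of_mem_union_setL (hK : p ∈ G.S u v 3 3 ∪ G.setK u v)
    (hL : p ∈ G.S u v 3 3 ∪ G.setL u v) : p ∈ G.S u v 3 3 := by
  rcases hK with hS | ⟨⟨-, hpv⟩, -⟩
  · exact hS
  rcases hL with hS | ⟨⟨-, hpv'⟩, -⟩
  · exact hS
  omega

theorem eq_of_existsUnique_edge {T : Set V} (h : ∃! e, ∃ x ∈ T, G.ends e = s(w, x))
    (hp : p ∈ T) (hq : q ∈ T) (hwp : G.Adjm w p) (hwq : G.Adjm w q) : p = q := by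
  obtain ⟨ep, hep⟩ := hwp
  obtain ⟨eq, heq⟩ := hwq
  obtain rfl : ep = eq := h.unique ⟨p, hp, hep⟩ ⟨q, hq, heq⟩
  exact Sym2.congr_right.mp (hep.symm.trans heq)

end Multigraph

theorem stmt12_general {V E : Type*} (G : Multigraph V E) (hdiam : G.diam = 4)
    (u v : V) :
    (∀ w ∈ G.setM' u v,
      G.nbhd w ∩ (G.S u v 3 3 ∪ G.setK u v ∪ G.setL u v) ⊆ G.S u v 3 3 ∧
      (G.nbhd w ∩ G.S u v 3 3).Nonempty) ∧
    (∀ w ∈ G.setM u v, G.nbhd w ∩ G.S u v 3 3 = ∅ →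
      (G.nbhd w ∩ G.setK u v).Nonempty ∧ (G.nbhd w ∩ G.setL u v).Nonempty) := by
  constructor
  · rintro w ⟨hw, huniq⟩
    obtain ⟨p, hwp, hpK⟩ := Multigraph.exists_adjm_mem_S_union_setK hdiam hw
    obtain ⟨q, hwq, hqL⟩ := Multigraph.exists_adjm_mem_S_union_setL hdiam hw
    have hpT : p ∈ G.S u v 3 3 ∪ G.setK u v ∪ G.setL u v := Or.inl hpK
    have hqT : q ∈ G.S u v 3 3 ∪ G.setK u v ∪ G.setL u v := hqL.imp Or.inl id
    obtain rfl := Multigraph.eq_of_existsUnique_edge huniq hpT hqT hwp hwq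
    have hpS := Multigraph.mem_S_of_mem_union_setK_of_mem_union_setL hpK hqL
    refine ⟨fun x ⟨hwx, hx⟩ => ?_, p, hwp, hpS⟩
    rwa [Multigraph.eq_of_existsUnique_edge huniq hx hpT hwx hwp]
  · rintro w ⟨hw, -⟩ hempty
    have hnotS : ∀ x ∈ G.nbhd w, x ∉ G.S u v 3 3 := fun x hx hxS =>
      Set.eq_empty_iff_forall_notMem.mp hempty x ⟨hx, hxS⟩
    obtain ⟨p, hwp, hpK⟩ := Multigraph.exists_adjm_mem_S_union_setK hdiam hw
    obtain ⟨q, hwq, hqL⟩ := Multigraph.exists_adjm_mem_S_union_setL hdiam hw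
    exact ⟨⟨p, hwp, hpK.resolve_left (hnotS p hwp)⟩, ⟨q, hwq, hqL.resolve_left (hnotS q hwq)⟩⟩

/-- **Proposition 1.** Let `G` be a bridgeless graph with `d(G) = 4` and let
`uv` be an edge with `l_G(uv) = g*(G) ≥ 6`. Then: (i) for every `w ∈ M'`, the set
`N(w) ∩ (S₃₃ ∪ K ∪ L)` is contained in `S₃₃` (so `w` has a neighbour in `S₃₃` and no
neighbour in `K ∪ L`); and (ii) every `w ∈ M` with no edge joining `w` to `S₃₃` has a
neighbour in `K` and a neighbour in `L`. -/
theorem stmt12 {V E : Type*} [Fintype V] [Fintype E] (G : Multigraph V E)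
    (hconn : G.toSimple.Connected) (hbridgeless : G.Bridgeless) (hdiam : G.diam = 4)
    (u v : V) (e : E) (he : G.ends e = s(u, v))
    (hmax : G.edgeGirth e = G.maxEdgeGirth) (h6 : 6 ≤ G.maxEdgeGirth) :
    (∀ w ∈ G.setM' u v,
      G.nbhd w ∩ (G.S u v 3 3 ∪ G.setK u v ∪ G.setL u v) ⊆ G.S u v 3 3 ∧
      (G.nbhd w ∩ G.S u v 3 3).Nonempty) ∧
    (∀ w ∈ G.setM u v, G.nbhd w ∩ G.S u v 3 3 = ∅ →
      (G.nbhd w ∩ G.setK u v).Nonempty ∧ (G.nbhd w ∩ G.setL u v).Nonempty) :=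
  stmt12_general G hdiam u v
end

section
/- Let G be a bridgeless graph with d(G)=4 and let uv be an edge with l_G(uv) = g*(G) = 9. Then S_{3,3} = ∅, and there is no edge of G between S_{1,2} and S_{2,1}, no edge between S_{2,3} and S_{3,2}, and no edge between S_{3,4} and S_{4,3}. -/
/-
A shortest path from `w` to `u` passes through `v` only if `d(w,u) = d(w,v) + 1`; so when
`d(w,u) ≤ d(w,v)` it avoids the edge `uv`, and symmetrically for `v`. From a vertex of `S_{3,3}`,
or from the two ends of an edge between `S_{i,i+1}` and `S_{i+1,i}` with `1 ≤ i ≤ 3`, such paths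
combine into a `u`–`v` walk of length at most `7` avoiding `uv`. Closing it with `uv` yields a
cycle through `uv` of length at most `8 < l_G(uv)`.
-/

theorem SimpleGraph.Walk.dist_add_dist_le_length {V : Type*} {G : SimpleGraph V} {a b s : V}
    (p : G.Walk a b) (hs : s ∈ p.support) : G.dist a s + G.dist s b ≤ p.length := by
  classical
  calc G.dist a s + G.dist s b ≤ (p.takeUntil s hs).length + (p.dropUntil s hs).length :=
        add_le_add (SimpleGraph.dist_le _) (SimpleGraph.dist_le _)
    _ = p.length := by rw [← SimpleGraph.Walk.length_append, p.take_spec hs]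

namespace Multigraph

variable {V E : Type*} {G : Multigraph V E} {e : E} {u v : V}

theorem ne_of_ends_eq (he : G.ends e = s(u, v)) : u ≠ v := by
  rintro rfl
  exact G.loopless e (he ▸ Sym2.mk_isDiag_iff.mpr rfl)

theorem Adjm.ne_s15 {x y : V} (h : G.Adjm x y) : x ≠ y :=
  let ⟨_, hf⟩ := h
  ne_of_ends_eq hf

theorem toSimple_adj_of_ends_eq (he : G.ends e = s(u, v)) : G.toSimple.Adj u v :=
  ⟨ne_of_ends_eq he, e, he⟩

theorem mem_edgeSet_toSimple_deleteEdge {f : Sym2 V} (hf : f ∈ G.toSimple.edgeSet)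
    (hfe : f ≠ G.ends e) : f ∈ (G.deleteEdge e).toSimple.edgeSet := by
  induction f using Sym2.ind with
  | _ x y =>
    obtain ⟨hxy, f, hf⟩ := hf
    exact ⟨hxy, ⟨f, by rintro rfl; exact hfe hf.symm⟩, hf⟩

theorem Adjm.toSimple_deleteEdge (he : G.ends e = s(u, v)) {x y : V} (h : G.Adjm x y)
    (hxu : x ≠ u) (hxv : x ≠ v) : (G.deleteEdge e).toSimple.Adj x y := by
  refine mem_edgeSet_toSimple_deleteEdge ((SimpleGraph.mem_edgeSet _).2 ⟨h.ne_s15, h⟩) ?_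
  rw [he]
  intro hxy
  have hx : x ∈ s(u, v) := hxy ▸ Sym2.mem_mk_left x y
  rcases Sym2.mem_iff.mp hx with rfl | rfl
  · exact hxu rfl
  · exact hxv rfl

theorem exists_walk_of_deleteEdge_walk {a b : V} (q : (G.deleteEdge e).toSimple.Walk a b) :
    ∃ p : G.Walk a b, p.length = q.length ∧ p.support = q.support ∧
      p.edges.map G.ends = q.edges ∧ e ∉ p.edges := by
  induction q with
  | nil => exact ⟨.nil, rfl, rfl, rfl, List.not_mem_nil⟩
  | @cons x y z h q ih =>
    obtain ⟨p, hlen, hsupp, hedges, he⟩ := ih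
    obtain ⟨-, f, hf⟩ := h
    refine ⟨.cons f.1 hf p, congrArg (· + 1) hlen, congrArg (x :: ·) hsupp, ?_, ?_⟩
    · simp only [Walk.edges, List.map_cons, hedges]
      exact congrArg (· :: q.edges) hf
    · simp only [Walk.edges, List.mem_cons, not_or]
      exact ⟨fun h => f.2 h.symm, he⟩

theorem edgeGirth_le_length_add_one (he : G.ends e = s(u, v))
    (W : (G.deleteEdge e).toSimple.Walk u v) : G.edgeGirth e ≤ W.length + 1 := by
  classical
  obtain ⟨p, hlen, hsupp, hedges, hep⟩ := exists_walk_of_deleteEdge_walk W.bypass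
  have hpath := W.bypass_isPath
  let c : G.Walk v v := .cons e (he.trans Sym2.eq_swap) p
  have hc : c.IsCycle := by
    refine ⟨List.nodup_cons.mpr ⟨hep, ?_⟩, ?_, Nat.succ_pos _⟩
    · exact List.Nodup.of_map _ (hedges ▸ hpath.isTrail.edges_nodup)
    · exact (hsupp ▸ hpath.support_nodup : p.support.Nodup)
  calc G.edgeGirth e ≤ c.length := Nat.sInf_le ⟨v, c, hc, List.mem_cons_self, rfl⟩
    _ = W.bypass.length + 1 := congrArg (· + 1) hlen
    _ ≤ W.length + 1 := Nat.succ_le_succ W.length_bypass_le_length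

theorem exists_deleteEdge_walk_length_eq_dist (he : G.ends e = s(u, v)) {a : V}
    (ha : G.toSimple.Reachable a u) (hav : G.dist a u ≤ G.dist a v) :
    ∃ q : (G.deleteEdge e).toSimple.Walk a u, q.length = G.dist a u := by
  obtain ⟨p, hp⟩ := ha.exists_walk_length_eq_dist
  have hv : v ∉ p.support := fun hv => by
    have := p.dist_add_dist_le_length hv
    have := SimpleGraph.dist_eq_one_iff_adj.mpr (toSimple_adj_of_ends_eq he).symm
    unfold Multigraph.dist at hav
    omega
  refine ⟨p.transfer _ fun f hf => mem_edgeSet_toSimple_deleteEdge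
    (p.edges_subset_edgeSet hf) fun hfe => hv ?_, (p.length_transfer _).trans hp⟩
  exact p.snd_mem_support_of_mem_edges (he ▸ hfe ▸ hf)

theorem edgeGirth_le_of_deleteEdge_walk (he : G.ends e = s(u, v)) {x y : V}
    (hx : G.toSimple.Reachable x u) (hy : G.toSimple.Reachable y v)
    (hxu : G.dist x u ≤ G.dist x v) (hyv : G.dist y v ≤ G.dist y u)
    (r : (G.deleteEdge e).toSimple.Walk x y) :
    G.edgeGirth e ≤ G.dist x u + r.length + G.dist y v + 1 := by
  obtain ⟨qx, hqx⟩ := exists_deleteEdge_walk_length_eq_dist he hx hxu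
  obtain ⟨qy, hqy⟩ := exists_deleteEdge_walk_length_eq_dist (he.trans Sym2.eq_swap) hy hyv
  have := edgeGirth_le_length_add_one he ((qx.reverse.append r).append qy)
  simpa only [SimpleGraph.Walk.length_append, SimpleGraph.Walk.length_reverse, hqx, hqy]
    using this

theorem edgeGirth_le_of_mem_S (he : G.ends e = s(u, v)) {w : V} {i : ℕ} (hi : 0 < i)
    (hw : w ∈ G.S u v i i) : G.edgeGirth e ≤ 2 * i + 1 := by
  obtain ⟨hwu, hwv⟩ := hw
  have := edgeGirth_le_of_deleteEdge_walk he (.of_dist_ne_zero (show G.dist w u ≠ 0 by omega))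
    (.of_dist_ne_zero (show G.dist w v ≠ 0 by omega)) (by omega) (by omega) .nil
  simp only [hwu, hwv, SimpleGraph.Walk.length_nil] at this
  omega

theorem edgeGirth_le_of_adjm_of_mem_S (he : G.ends e = s(u, v)) {x y : V} {i : ℕ} (hi : 0 < i)
    (hx : x ∈ G.S u v i (i + 1)) (hy : y ∈ G.S u v (i + 1) i) (hxy : G.Adjm x y) :
    G.edgeGirth e ≤ 2 * i + 2 := by
  obtain ⟨hxu, hxv⟩ := hx
  obtain ⟨hyu, hyv⟩ := hy
  have hxu' : x ≠ u := by rintro rfl; simp [Multigraph.dist] at hxu; omega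
  have hxv' : x ≠ v := by rintro rfl; simp [Multigraph.dist] at hxv
  have := edgeGirth_le_of_deleteEdge_walk he (.of_dist_ne_zero (show G.dist x u ≠ 0 by omega))
    (.of_dist_ne_zero (show G.dist y v ≠ 0 by omega)) (by omega) (by omega)
    (SimpleGraph.Adj.toWalk (hxy.toSimple_deleteEdge he hxu' hxv'))
  simp only [hxu, hyv, SimpleGraph.Adj.length_toWalk] at this
  omega

end Multigraph

theorem stmt15_general {V E : Type*} (G : Multigraph V E)
    (u v : V) (e : E) (he : G.ends e = s(u, v))
    (hmax : G.edgeGirth e = G.maxEdgeGirth) (h9 : G.maxEdgeGirth = 9) :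
    G.S u v 3 3 = ∅ ∧
    (∀ x ∈ G.S u v 1 2, ∀ y ∈ G.S u v 2 1, ¬ G.Adjm x y) ∧
    (∀ x ∈ G.S u v 2 3, ∀ y ∈ G.S u v 3 2, ¬ G.Adjm x y) ∧
    (∀ x ∈ G.S u v 3 4, ∀ y ∈ G.S u v 4 3, ¬ G.Adjm x y) := by
  have hg : G.edgeGirth e = 9 := hmax.trans h9
  refine ⟨Set.eq_empty_of_forall_notMem fun w hw => ?_, ?_, ?_, ?_⟩
  · have := Multigraph.edgeGirth_le_of_mem_S he (by norm_num) hw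
    omega
  all_goals
    intro x hx y hy hxy
    have := Multigraph.edgeGirth_le_of_adjm_of_mem_S he (by norm_num) hx hy hxy
    omega

/-- Let `G` be a bridgeless graph with `d(G) = 4` and let `uv` be an edge
with `l_G(uv) = g*(G) = 9`. Then `S₃₃ = ∅`, and there is no edge of `G` between `S₁₂` and
`S₂₁`, none between `S₂₃` and `S₃₂`, and none between `S₃₄` and `S₄₃`. -/
theorem stmt15 {V E : Type*} [Fintype V] [Fintype E] (G : Multigraph V E)
    (hconn : G.toSimple.Connected) (hbridgeless : G.Bridgeless) (hdiam : G.diam = 4)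
    (u v : V) (e : E) (he : G.ends e = s(u, v))
    (hmax : G.edgeGirth e = G.maxEdgeGirth) (h9 : G.maxEdgeGirth = 9) :
    G.S u v 3 3 = ∅ ∧
    (∀ x ∈ G.S u v 1 2, ∀ y ∈ G.S u v 2 1, ¬ G.Adjm x y) ∧
    (∀ x ∈ G.S u v 2 3, ∀ y ∈ G.S u v 3 2, ¬ G.Adjm x y) ∧
    (∀ x ∈ G.S u v 3 4, ∀ y ∈ G.S u v 4 3, ¬ G.Adjm x y) :=
  stmt15_general G u v e he hmax h9
end
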